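/- Let e = {v_1,...,v_r} be an edge of color 1 in a k-colored complete r-uniform r-partite hypergraph (v_i in class V_i), and assume e is essential, i.e., e is not contained in a monochromatic component of any color other than 1. For each i let Col(R_i) be the set of colors appearing on edges of the form (e \ {v_i}) ∪ {v'_i} with v'_i in V_i. Then for distinct i and j, Col(R_i) ∩ Col(R_j) = {1}. -/

import Mathlib

open Classical

variable {V : Type*}

/-- `e` is an edge of the complete `r`-uniform `r`-partite hypergraph with
partition `part`: it meets every class in exactly one vertex. -/
def IsPartiteEdge {r : ℕ} (part : V → Fin r) (e : Finset V) : Prop :=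
  ∀ i : Fin r, (e.filter fun v => part v = i).card = 1

/-- `e` is an edge of the complete `r`-uniform `(r,ℓ)`-partite hypergraph:
an `r`-set meeting every class in at most `ℓ` vertices. -/
def IsRLEdge {r : ℕ} (part : V → Fin r) (ℓ : ℕ) (e : Finset V) : Prop :=
  e.card = r ∧ ∀ i : Fin r, (e.filter fun v => part v = i).card ≤ ℓ

/-- An edge is friendly if it meets at most one class in exactly `ℓ` vertices. -/
def Friendly {r : ℕ} (part : V → Fin r) (ℓ : ℕ) (e : Finset V) : Prop :=
  (Finset.univ.filter fun i : Fin r => (e.filter fun v => part v = i).card = ℓ).card ≤ 1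

/-- `u` and `v` lie in the same monochromatic component of color `c` of the
hypergraph with edge predicate `E` and edge coloring `χ`. -/
def MonoConn {k : ℕ} (E : Finset V → Prop) (χ : Finset V → Fin k) (c : Fin k)
    (u v : V) : Prop :=
  Relation.ReflTransGen (fun a b => ∃ e : Finset V, E e ∧ χ e = c ∧ a ∈ e ∧ b ∈ e) u v

/-- The coloring `χ` is spanning: every vertex is incident with an edge of every color. -/
def Spanning {k : ℕ} (E : Finset V → Prop) (χ : Finset V → Fin k) : Prop :=
  ∀ v : V, ∀ c : Fin k, ∃ e : Finset V, E e ∧ χ e = c ∧ v ∈ e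

/-- The vertex set can be covered by at most `m` monochromatic components. -/
def CoversBy {k : ℕ} (E : Finset V → Prop) (χ : Finset V → Fin k) (m : ℕ) : Prop :=
  ∃ f : Fin m → Fin k × V, ∀ v : V, ∃ i : Fin m, MonoConn E χ (f i).1 (f i).2 v

/-- Hamming distance of the component vectors of two vertices: the number of
colors `c` for which they lie in different monochromatic components of color `c`. -/
noncomputable def HamDist {k : ℕ} (E : Finset V → Prop) (χ : Finset V → Fin k)
    (v w : V) : ℕ :=
  (Finset.univ.filter fun c : Fin k => ¬ MonoConn E χ c v w).card

/-! If a color `c` appears on a replacement edge at `i` and on one at `j`, pick a third class `l`.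
The first edge contains every `v m` with `m ≠ i`, the second every `v m` with `m ≠ j`, and both
contain `v l`; so all of `e` lies in one component of color `c`, and essentiality forces `c = c₀`.
Conversely `c₀` is the color of `e` itself, the replacement of `v i` by `v i`. -/

namespace MonoConn

variable {k : ℕ} {E : Finset V → Prop} {χ : Finset V → Fin k} {c : Fin k} {a b d : V}

theorem of_mem {e : Finset V} (he : E e) (hc : χ e = c) (ha : a ∈ e) (hb : b ∈ e) :
    MonoConn E χ c a b :=
  Relation.ReflTransGen.single ⟨e, he, hc, ha, hb⟩

theorem symm (h : MonoConn E χ c a b) : MonoConn E χ c b a := by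
  induction h with
  | refl => exact .refl
  | tail _ hstep ih =>
    obtain ⟨e, he, hc, hx, hy⟩ := hstep
    exact .head ⟨e, he, hc, hy, hx⟩ ih

theorem trans (hab : MonoConn E χ c a b) (hbd : MonoConn E χ c b d) : MonoConn E χ c a d :=
  Relation.ReflTransGen.trans hab hbd

end MonoConn

section PartiteEdge

variable {r : ℕ} {part : V → Fin r}

theorem IsPartiteEdge.filter_eq {e : Finset V} (he : IsPartiteEdge part e) {x : V} (hx : x ∈ e) :
    e.filter (fun w => part w = part x) = {x} := by
  obtain ⟨y, hy⟩ := Finset.card_eq_one.1 (he (part x))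
  have hxy : x ∈ ({y} : Finset V) := hy ▸ Finset.mem_filter.2 ⟨hx, rfl⟩
  obtain rfl := Finset.mem_singleton.1 hxy
  exact hy

variable [DecidableEq V]

theorem IsPartiteEdge.insert_erase {e : Finset V} (he : IsPartiteEdge part e) {x y : V}
    (hx : x ∈ e) (hxy : part y = part x) : IsPartiteEdge part (insert y (e.erase x)) := by
  intro l
  rw [Finset.filter_insert, Finset.filter_erase]
  by_cases hl : part x = l
  · subst hl
    simp [hxy, he.filter_eq hx]
  · have hxl : x ∉ e.filter (fun w => part w = l) := fun h => hl (Finset.mem_filter.1 h).2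
    rw [if_neg (hxy ▸ hl), Finset.erase_eq_of_notMem hxl]
    exact he l

theorem isPartiteEdge_image_univ {v : Fin r → V} (hv : ∀ i, part (v i) = i) :
    IsPartiteEdge part (Finset.univ.image v) := by
  intro l
  have hfilter : (Finset.univ.image v).filter (fun w => part w = l) = {v l} := by
    ext w
    simp only [Finset.mem_filter, Finset.mem_image, Finset.mem_univ, true_and,
      Finset.mem_singleton]
    constructor
    · rintro ⟨⟨m, rfl⟩, hm⟩
      rw [hv] at hm
      rw [hm]
    · rintro rfl
      exact ⟨⟨l, rfl⟩, hv l⟩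
  rw [hfilter, Finset.card_singleton]

theorem mem_insert_erase_image_univ {v : Fin r → V} (hv : ∀ i, part (v i) = i) {i m : Fin r}
    (hm : m ≠ i) (x : V) :
    v m ∈ insert x ((Finset.univ.image v).erase (v i)) :=
  Finset.mem_insert_of_mem <| Finset.mem_erase.2
    ⟨fun h => hm (by simpa only [hv] using congrArg part h),
      Finset.mem_image_of_mem v (Finset.mem_univ m)⟩

theorem monoConn_of_replacements {k : ℕ} (hr : 3 ≤ r) {χ : Finset V → Fin k} {c : Fin k}
    {v : Fin r → V} (hv : ∀ i, part (v i) = i)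
    {i j : Fin r} (hij : i ≠ j) {x y : V} (hx : part x = i) (hy : part y = j)
    (hcx : χ (insert x ((Finset.univ.image v).erase (v i))) = c)
    (hcy : χ (insert y ((Finset.univ.image v).erase (v j))) = c) (a b : Fin r) :
    MonoConn (IsPartiteEdge part) χ c (v a) (v b) := by
  have hedge : IsPartiteEdge part (Finset.univ.image v) := isPartiteEdge_image_univ hv
  have hmem : ∀ m, v m ∈ Finset.univ.image v :=
    fun m => Finset.mem_image_of_mem v (Finset.mem_univ m)
  have hEx := hedge.insert_erase (hmem i) (by rw [hx, hv])
  have hEy := hedge.insert_erase (hmem j) (by rw [hy, hv])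
  obtain ⟨l, hli, hlj⟩ := Fin.exists_ne_and_ne_of_two_lt i j (by omega)
  have hroot : ∀ m, MonoConn (IsPartiteEdge part) χ c (v l) (v m) := by
    intro m
    by_cases hmi : m = i
    · subst hmi
      exact .of_mem hEy hcy (mem_insert_erase_image_univ hv hlj y)
        (mem_insert_erase_image_univ hv hij y)
    · exact .of_mem hEx hcx (mem_insert_erase_image_univ hv hli x)
        (mem_insert_erase_image_univ hv hmi x)
  exact (hroot a).symm.trans (hroot b)

end PartiteEdge

theorem stmt_2 [DecidableEq V] {r k : ℕ} (hr : 3 ≤ r)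
    (part : V → Fin r)
    (χ : Finset V → Fin k)
    (v : Fin r → V) (hv : ∀ i, part (v i) = i)
    (c₀ : Fin k) (hc₀ : χ (Finset.image v Finset.univ) = c₀)
    (hess : ∀ c : Fin k, c ≠ c₀ →
      ∃ i j : Fin r, ¬ MonoConn (IsPartiteEdge part) χ c (v i) (v j))
    (i j : Fin r) (hij : i ≠ j) :
    {c : Fin k | ∃ v' : V, part v' = i ∧
        χ (insert v' ((Finset.image v Finset.univ).erase (v i))) = c} ∩
      {c : Fin k | ∃ v' : V, part v' = j ∧
        χ (insert v' ((Finset.image v Finset.univ).erase (v j))) = c} = {c₀} := by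
  ext c
  simp only [Set.mem_inter_iff, Set.mem_ofPred_eq, Set.mem_singleton_iff]
  constructor
  · rintro ⟨⟨x, hx, hcx⟩, ⟨y, hy, hcy⟩⟩
    by_contra hc
    obtain ⟨a, b, hab⟩ := hess c hc
    exact hab (monoConn_of_replacements hr hv hij hx hy hcx hcy a b)
  · rintro rfl
    have hmem : ∀ m, v m ∈ Finset.image v Finset.univ :=
      fun m => Finset.mem_image_of_mem v (Finset.mem_univ m)
    exact ⟨⟨v i, hv i, by rw [Finset.insert_erase (hmem i), hc₀]⟩,
      ⟨v j, hv j, by rw [Finset.insert_erase (hmem j), hc₀]⟩⟩
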